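/- Let n ≥ 3 be odd, 0 ≤ k ≤ n-2, and let d_0, ..., d_{n-2} ∈ ℝ. Let Γ ⊆ E(1) be the subgroup generated by D_0, ..., D_{n-2}, where D_k = (1, d_k) and D_i = (-1, d_i) for i ≠ k. Then there exists a surjective group homomorphism Φ : F(n-1, 2n) → Γ such that Φ(a_i) = D_i for all i = 0, ..., n-2. -/

import Mathlib

/-!
Extend `D 0, …, D (n-2)` to the sequence `x` in `E(1)` defined by the Fibonacci recursion
`x (v + r) = x v ⋯ x (v + r - 1)`, `r = n - 1`; it is enough that `x` has period `2n`, since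
then `a_i ↦ x i` respects the relations of `F(n-1, 2n)`. Comparing the recursions at `v` and
`v + 1` gives `x (v + r) ^ 2 = x v * x (v + r + 1)`. On rotational parts this makes the signs
periodic with period `n`, and as `r` is even exactly one of any `n` consecutive terms is a
translation. Reflections are involutions and `u s u = s` for a reflection `s` and a translation
`u`, so applying the square identity twice brings `x (v + 2n)` back to `x v`.
-/

@[ext] structure E1 where
  ε : ℝˣ
  d : ℝ

namespace E1

instance : Mul E1 := ⟨fun a b => ⟨a.ε * b.ε, (a.ε : ℝ) * b.d + a.d⟩⟩
instance : One E1 := ⟨⟨1, 0⟩⟩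
instance : Inv E1 := ⟨fun a => ⟨a.ε⁻¹, -(((a.ε⁻¹ : ℝˣ) : ℝ) * a.d)⟩⟩

@[simp] lemma mul_def (a b : E1) : a * b = ⟨a.ε * b.ε, (a.ε : ℝ) * b.d + a.d⟩ := rfl
@[simp] lemma one_def : (1 : E1) = ⟨1, 0⟩ := rfl
@[simp] lemma inv_def (a : E1) : a⁻¹ = ⟨a.ε⁻¹, -(((a.ε⁻¹ : ℝˣ) : ℝ) * a.d)⟩ := rfl

instance : Group E1 where
  mul_assoc a b c := by ext <;> simp [mul_assoc] <;> ring
  one_mul a := by ext <;> simp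
  mul_one a := by ext <;> simp
  inv_mul_cancel a := by ext <;> simp

end E1

/-- The Fibonacci relation `a_i a_{i+1} ⋯ a_{i+r-1} = a_{i+r}` (indices mod `m`),
written as a relator in the free group on `ZMod m`. -/
def fibonacciRelation (r m : ℕ) (i : ZMod m) : FreeGroup (ZMod m) :=
  ((List.range r).map (fun j => FreeGroup.of (i + (j : ZMod m)))).prod *
    (FreeGroup.of (i + (r : ZMod m)))⁻¹

/-- The Fibonacci group `F(r, m) = ⟨a_0, …, a_{m-1} ∣ a_i a_{i+1} ⋯ a_{i+r-1} = a_{i+r}⟩`. -/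
abbrev FibonacciGroup (r m : ℕ) : Type :=
  PresentedGroup (Set.range (fibonacciRelation r m))

open Function

section FibonacciSequence

variable {G : Type*} [Monoid G] {r : ℕ}

def fibSeq (r : ℕ) (D : Fin r → G) (v : ℕ) : G :=
  if h : v < r then D ⟨v, h⟩
  else (List.ofFn fun j : Fin r => fibSeq r D (v - r + j)).prod
decreasing_by omega

theorem fibSeq_of_lt (D : Fin r → G) {v : ℕ} (hv : v < r) : fibSeq r D v = D ⟨v, hv⟩ := by
  rw [fibSeq, dif_pos hv]

theorem fibSeq_add (D : Fin r → G) (v : ℕ) :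
    fibSeq r D (v + r) = (List.ofFn fun j : Fin r => fibSeq r D (v + j)).prod := by
  rw [fibSeq, dif_neg (by omega), Nat.add_sub_cancel]

theorem fibSeq_add_eq_prod_range (D : Fin r → G) (v : ℕ) :
    fibSeq r D (v + r) = ((List.range r).map fun j => fibSeq r D (v + j)).prod := by
  rw [fibSeq_add, List.ofFn_eq_map, ← List.map_coe_finRange_eq_range, List.map_map]
  rfl

theorem fibSeq_add_mul_self (D : Fin r → G) (v : ℕ) :
    fibSeq r D (v + r) * fibSeq r D (v + r) = fibSeq r D v * fibSeq r D (v + r + 1) := by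
  rw [show v + r + 1 = v + 1 + r by omega, fibSeq_add_eq_prod_range D (v + 1)]
  nth_rw 1 [fibSeq_add_eq_prod_range D v]
  rw [← List.prod_range_succ (fun j => fibSeq r D (v + j)), List.prod_range_succ']
  simp only [add_zero, Nat.succ_eq_add_one, add_assoc, add_comm 1]

theorem map_fibSeq {H : Type*} [Monoid H] (f : G →* H) (D : Fin r → G) (v : ℕ) :
    f (fibSeq r D v) = fibSeq r (f ∘ D) v := by
  induction v using Nat.strong_induction_on with
  | _ v ih =>
    rcases lt_or_ge v r with hv | hv
    · simp only [fibSeq_of_lt _ hv, comp_apply]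
    · obtain ⟨w, rfl⟩ := Nat.exists_eq_add_of_le' hv
      rw [fibSeq_add, fibSeq_add, map_list_prod, List.map_ofFn]
      exact congrArg _ (List.ofFn_inj.mpr (funext fun j => ih _ (by omega)))

theorem fibSeq_mem {S : Type*} [SetLike S G] [SubmonoidClass S G] (H : S) {D : Fin r → G}
    (hD : ∀ i, D i ∈ H) (v : ℕ) : fibSeq r D v ∈ H := by
  induction v using Nat.strong_induction_on with
  | _ v ih =>
    rcases lt_or_ge v r with hv | hv
    · exact fibSeq_of_lt D hv ▸ hD _
    · obtain ⟨w, rfl⟩ := Nat.exists_eq_add_of_le' hv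
      rw [fibSeq_add]
      exact list_prod_mem (by simpa using fun j => ih _ (by omega))

end FibonacciSequence

theorem closure_range_fibSeq {G : Type*} [Group G] {r : ℕ} (D : Fin r → G) :
    Subgroup.closure (Set.range (fibSeq r D)) = Subgroup.closure (Set.range D) := by
  refine le_antisymm ?_ ?_
  · rw [Subgroup.closure_le]
    rintro _ ⟨v, rfl⟩
    exact fibSeq_mem _ (fun i => Subgroup.subset_closure (Set.mem_range_self i)) v
  · refine Subgroup.closure_mono ?_
    rintro _ ⟨i, rfl⟩
    exact Set.mem_range.mpr ⟨i, fibSeq_of_lt D i.isLt⟩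

theorem fibSeq_periodic_of_mul_self_eq_one {G : Type*} [CommGroup G] {r : ℕ} {D : Fin r → G}
    (hD : ∀ i, D i * D i = 1) : Periodic (fibSeq r D) (r + 1) := by
  have hsq (v : ℕ) : fibSeq r D v * fibSeq r D v = 1 := by
    simpa [sq] using fibSeq_mem (powMonoidHom 2 : G →* G).ker (by simpa [sq] using hD) v
  intro v
  have h : fibSeq r D v * fibSeq r D (v + r + 1) = 1 := by
    rw [← fibSeq_add_mul_self, hsq]
  rw [← add_assoc, eq_inv_of_mul_eq_one_right h, inv_eq_of_mul_eq_one_right (hsq v)]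

theorem fibSeq_signs {R : Type*} [CommRing R] {r : ℕ} (hr : Even r) (k : Fin r) (v : ℕ) :
    fibSeq r (fun i => if i = k then 1 else -1 : Fin r → Rˣ) v =
      if v % (r + 1) = k then 1 else -1 := by
  have hper := fibSeq_periodic_of_mul_self_eq_one (r := r)
    (D := fun i => if i = k then (1 : Rˣ) else -1) (fun i => by split_ifs <;> simp)
  rw [← hper.map_mod_nat]
  obtain hv | hv : v % (r + 1) < r ∨ v % (r + 1) = r := by
    have := Nat.mod_lt v (show 0 < r + 1 by omega); omega
  · simp [fibSeq_of_lt _ hv, Fin.ext_iff]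
  · have hkr : (k : ℕ) ≠ r := k.isLt.ne
    have hodd : Odd (r - 1) := Nat.Even.sub_odd (by omega) hr odd_one
    have h0 := fibSeq_add (fun i : Fin r => if i = k then (1 : Rˣ) else -1) 0
    rw [zero_add] at h0
    rw [hv, if_neg hkr.symm, h0, List.prod_ofFn]
    simp [fibSeq_of_lt, Finset.prod_ite, Finset.filter_ne', hodd.neg_one_pow]

namespace FibonacciGroup

variable {G : Type*} [Group G] {r m : ℕ} [NeZero m] {x : ℕ → G}

theorem lift_fibonacciRelation
    (hx : ∀ v, x (v + r) = ((List.range r).map fun j => x (v + j)).prod) (hper : Periodic x m) :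
    ∀ ρ ∈ Set.range (fibonacciRelation r m),
      FreeGroup.lift (fun i : ZMod m => x i.val) ρ = 1 := by
  have hval (i : ZMod m) (j : ℕ) : x (i + (j : ZMod m)).val = x (i.val + j) := by
    rw [ZMod.val_add, ZMod.val_natCast, Nat.add_mod_mod, hper.map_mod_nat]
  rintro _ ⟨i, rfl⟩
  rw [fibonacciRelation, bind_pure_comp, map_mul, map_inv, mul_inv_eq_one, map_list_prod]
  simp only [List.map_eq_map, List.map_map, comp_def, FreeGroup.lift_apply_of, hval, hx]

def lift (hx : ∀ v, x (v + r) = ((List.range r).map fun j => x (v + j)).prod)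
    (hper : Periodic x m) : FibonacciGroup r m →* G :=
  PresentedGroup.toGroup (lift_fibonacciRelation hx hper)

variable (hx : ∀ v, x (v + r) = ((List.range r).map fun j => x (v + j)).prod)
  (hper : Periodic x m)

@[simp]
theorem lift_of (i : ZMod m) : lift hx hper (PresentedGroup.of i) = x i.val :=
  PresentedGroup.toGroup.of _

theorem range_lift : (lift hx hper).range = Subgroup.closure (Set.range x) := by
  rw [MonoidHom.range_eq_map, ← PresentedGroup.closure_range_of, MonoidHom.map_closure,
    ← Set.range_comp]
  congr 1
  ext g
  constructor
  · rintro ⟨i, rfl⟩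
    exact ⟨i.val, (lift_of hx hper i).symm⟩
  · rintro ⟨v, rfl⟩
    exact ⟨v, by simp [ZMod.val_natCast, hper.map_mod_nat]⟩

end FibonacciGroup

namespace E1

def rotationHom : E1 →* ℝˣ where
  toFun := E1.ε
  map_one' := rfl
  map_mul' _ _ := rfl

@[simp]
theorem rotationHom_apply (x : E1) : rotationHom x = x.ε := rfl

theorem mul_self_eq_one_of_ε_eq_neg_one {s : E1} (hs : s.ε = -1) : s * s = 1 := by
  ext <;> simp [hs]

theorem mul_mul_eq_of_ε_eq_neg_one_of_ε_eq_one {s u : E1} (hs : s.ε = -1) (hu : u.ε = 1) :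
    u * s * u = s := by
  ext <;> simp [hs, hu]

theorem periodic_of_mul_self_eq_mul {r k : ℕ} (hr : 0 < r) {x : ℕ → E1}
    (hsq : ∀ v, x (v + r) * x (v + r) = x v * x (v + r + 1))
    (hε : ∀ v, (x v).ε = if v % (r + 1) = k then 1 else -1) :
    Periodic x (2 * (r + 1)) := by
  have hstep (w : ℕ) : x (w + r + 1) = (x w)⁻¹ * (x (w + r) * x (w + r)) :=
    eq_inv_mul_of_mul_eq (hsq w).symm
  have hshift (a : ℕ) : (a + r) % (r + 1) ≠ a % (r + 1) := by
    intro h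
    have : r ≡ 0 [MOD r + 1] := Nat.ModEq.add_left_cancel' a (by rwa [add_zero])
    rw [Nat.ModEq, Nat.zero_mod, Nat.mod_eq_of_lt (Nat.lt_succ_self r)] at this
    omega
  have hrefl (w : ℕ) (hw : w % (r + 1) ≠ k) : x w * x w = 1 :=
    mul_self_eq_one_of_ε_eq_neg_one (by rw [hε, if_neg hw])
  intro v
  have h₁ := hstep v
  have h₂ : x (v + 2 * (r + 1)) =
      (x (v + r + 1))⁻¹ * (x (v + r + r + 1) * x (v + r + r + 1)) := by
    rw [show v + 2 * (r + 1) = v + r + 1 + r + 1 by ring,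
      show v + r + r + 1 = v + r + 1 + r by ring]
    exact hstep _
  rw [h₂]
  by_cases hk : (v + r) % (r + 1) = k
  · have hv : v % (r + 1) ≠ k := by rw [← hk, ne_comm]; exact hshift v
    have hv' : (v + r + r) % (r + 1) ≠ k := hk ▸ hshift (v + r)
    rw [hstep (v + r), hrefl _ hv', mul_one, h₁]
    set t := x (v + r)
    calc _ = (t⁻¹ * t⁻¹) * x v * (t⁻¹ * t⁻¹) := by group
      _ = x v := mul_mul_eq_of_ε_eq_neg_one_of_ε_eq_one ((hε v).trans (if_neg hv))
        (by simp [t, hε, hk])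
  · have hv' : (v + r + r + 1) % (r + 1) ≠ k := by rwa [add_assoc _ r 1, Nat.add_mod_right]
    rw [hrefl _ hv', mul_one, h₁, hrefl _ hk, mul_one, inv_inv]

end E1

/-- For odd `n ≥ 3`, `0 ≤ k ≤ n-2`, and reals `d 0, …, d (n-2)`, with `D k = (1, d k)` and
`D i = (-1, d i)` for `i ≠ k`, `i ≤ n-2`, there is a homomorphism from the Fibonacci group
`F(n-1, 2n)` sending `a i` to `D i` for `0 ≤ i ≤ n-2`, surjective onto the subgroup
generated by `D 0, …, D (n-2)`. -/
theorem exists_epi_onto_one_dim_cryst_general (n : ℕ) (hn : 3 ≤ n) (hodd : Odd n)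
    (k : ℕ) (hk : k ≤ n - 2) (d : ℕ → ℝ) (D : ℕ → E1)
    (hDk : D k = ⟨1, d k⟩)
    (hDi : ∀ i : ℕ, i ≤ n - 2 → i ≠ k → D i = ⟨-1, d i⟩) :
    ∃ Φ : FibonacciGroup (n - 1) (2 * n) →* E1,
      (∀ i : ℕ, i ≤ n - 2 → Φ (PresentedGroup.of ((i : ZMod (2 * n)))) = D i) ∧
      Φ.range = Subgroup.closure {x : E1 | ∃ i : ℕ, i ≤ n - 2 ∧ D i = x} := by
  set r := n - 1 with hr
  have hkr : k < r := by omega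
  have : NeZero (2 * n) := ⟨by omega⟩
  let D' : Fin r → E1 := fun i => D i
  have hrot : E1.rotationHom ∘ D' = fun i => if i = ⟨k, hkr⟩ then 1 else -1 := by
    ext1 i
    by_cases hi : (i : ℕ) = k
    · simp [D', hi, hDk, Fin.ext_iff]
    · simp [D', hi, hDi i (by omega) hi, Fin.ext_iff]
  have hper : Periodic (fibSeq r D') (2 * n) := by
    have hε (v : ℕ) := (map_fibSeq E1.rotationHom D' v).trans
      (hrot ▸ fibSeq_signs (Nat.Odd.sub_odd hodd odd_one) ⟨k, hkr⟩ v)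
    simpa [show r + 1 = n by omega] using
      E1.periodic_of_mul_self_eq_mul (by omega) (fibSeq_add_mul_self D') hε
  refine ⟨FibonacciGroup.lift (fibSeq_add_eq_prod_range D') hper, fun i hi => ?_, ?_⟩
  · rw [FibonacciGroup.lift_of, ZMod.val_natCast, Nat.mod_eq_of_lt (by omega),
      fibSeq_of_lt D' (by omega)]
  · rw [FibonacciGroup.range_lift, closure_range_fibSeq]
    congr 1
    ext y
    simp only [Set.mem_range, Set.mem_ofPred_eq, D']
    exact ⟨fun ⟨i, hi⟩ => ⟨i, by omega, hi⟩,
      fun ⟨i, hi, h⟩ => ⟨⟨i, by omega⟩, h⟩⟩
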